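/- The perfect domination numbers of the 10×4, 11×4, and 12×4 knights graphs all equal 16. -/

import Mathlib

def knightAdj (p q : ℤ × ℤ) : Prop :=
  (|p.1 - q.1| = 1 ∧ |p.2 - q.2| = 2) ∨ (|p.1 - q.1| = 2 ∧ |p.2 - q.2| = 1)

lemma knightAdj_symm {p q : ℤ × ℤ} (h : knightAdj p q) : knightAdj q p := by
  unfold knightAdj at *
  rcases h with ⟨h1, h2⟩ | ⟨h1, h2⟩
  · left; rw [abs_sub_comm, abs_sub_comm q.2]; exact ⟨h1, h2⟩
  · right; rw [abs_sub_comm, abs_sub_comm q.2]; exact ⟨h1, h2⟩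

lemma knightAdj_irrefl (p : ℤ × ℤ) : ¬ knightAdj p p := by
  unfold knightAdj; simp

/-- The knights graph on an `n`-column, `m`-row chessboard. -/
def KN (n m : ℕ) : SimpleGraph (Fin n × Fin m) where
  Adj p q := knightAdj ((p.1 : ℤ), (p.2 : ℤ)) ((q.1 : ℤ), (q.2 : ℤ))
  symm := ⟨fun _ _ h => knightAdj_symm h⟩
  loopless := ⟨fun p => knightAdj_irrefl _⟩

/-- The infinite knights graph on `ℤ × ℤ`. -/
def KNZZ : SimpleGraph (ℤ × ℤ) where
  Adj := knightAdj
  symm := ⟨fun _ _ h => knightAdj_symm h⟩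
  loopless := ⟨knightAdj_irrefl⟩

/-- The quarter-infinite knights graph on `ℕ × ℕ`. -/
def KNNN : SimpleGraph (ℕ × ℕ) where
  Adj p q := knightAdj ((p.1 : ℤ), (p.2 : ℤ)) ((q.1 : ℤ), (q.2 : ℤ))
  symm := ⟨fun _ _ h => knightAdj_symm h⟩
  loopless := ⟨fun p => knightAdj_irrefl _⟩

/-- The half-plane knights graph on `ℤ × ℕ`. -/
def KNZN : SimpleGraph (ℤ × ℕ) where
  Adj p q := knightAdj (p.1, (p.2 : ℤ)) (q.1, (q.2 : ℤ))
  symm := ⟨fun _ _ h => knightAdj_symm h⟩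
  loopless := ⟨fun p => knightAdj_irrefl _⟩

/-- `S` is a perfect dominating set of `G`: every vertex not in `S` is adjacent to
exactly one vertex of `S`. -/
def IsPerfDomSet {V : Type*} (G : SimpleGraph V) (S : Set V) : Prop :=
  ∀ v ∉ S, ∃! u, u ∈ S ∧ G.Adj v u

/-- The perfect domination number of `G`. -/
noncomputable def perfDomNum {V : Type*} (G : SimpleGraph V) : ℕ :=
  sInf {k | ∃ S : Set V, IsPerfDomSet G S ∧ S.ncard = k}


/-! The upper bounds are explicit perfect dominating sets of 16 vertices. The lower bounds come
from an exhaustive search: the vertices are decided one at a time, column by column, and a branch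
is abandoned as soon as it has `k` members, or some decided non-member already has two members
among its neighbours, or has none while all its neighbours are decided. A perfect dominating set
with fewer than `k` vertices is never pruned along its own branch, so a search that fails (which
the kernel checks by evaluation) proves `k ≤ γ_p`. -/

open Finset

section PerfectDomination

variable {V : Type*} {G : SimpleGraph V}

lemma isPerfDomSet_univ : IsPerfDomSet G Set.univ := fun v hv => absurd (Set.mem_univ v) hv

lemma perfDomNum_le {S : Set V} (hS : IsPerfDomSet G S) : perfDomNum G ≤ S.ncard :=
  Nat.sInf_le ⟨S, hS, rfl⟩

lemma le_perfDomNum {k : ℕ} (h : ∀ S, IsPerfDomSet G S → k ≤ S.ncard) : k ≤ perfDomNum G :=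
  le_csInf ⟨_, Set.univ, isPerfDomSet_univ, rfl⟩ (by rintro _ ⟨S, hS, rfl⟩; exact h S hS)

lemma isPerfDomSet_iff_card [Fintype V] [DecidableRel G.Adj] {S : Set V} [DecidablePred (· ∈ S)] :
    IsPerfDomSet G S ↔ ∀ v ∉ S, #{u | u ∈ S ∧ G.Adj v u} = 1 :=
  forall₂_congr fun _ _ => Fintype.existsUnique_iff_card_one _

end PerfectDomination

namespace PerfDomSearch

variable (N k : ℕ) (nbrs : ℕ → List ℕ)

def nbrCount (b i : ℕ) : ℕ := (nbrs i).countP b.testBit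

def isPerfectMask (b : ℕ) : Bool :=
  (List.range N).all fun i => b.testBit i || nbrCount nbrs b i == 1

-- The decided non-member `i` can no longer end up with exactly one chosen neighbour.
def isDoomed (m b i : ℕ) : Bool :=
  decide (i < m) && !b.testBit i &&
    match nbrCount nbrs b i with
    | 0 => (nbrs i).all (· < m)
    | 1 => false
    | _ + 2 => true

-- Only the last decided vertex and its neighbours can have become doomed by the last decision.
def prune (m b c : ℕ) : Bool :=
  decide (k ≤ c) || ((m - 1) :: nbrs (m - 1)).any (isDoomed nbrs m b)

/-- The state: vertices `< m` are decided, `b` is the bitmask of the chosen ones, `c` their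
number; `fuel = N - m`. -/
def search : ℕ → ℕ → ℕ → ℕ → Bool
  | 0, _, b, c => isPerfectMask N nbrs b && decide (c < k)
  | fuel + 1, m, b, c => !prune k nbrs m b c &&
      (search fuel (m + 1) b c || search fuel (m + 1) (b ||| 2 ^ m) (c + 1))

structure IsSmallPerfect (s : ℕ → Bool) : Prop where
  eq_false_of_le : ∀ j, N ≤ j → s j = false
  countP_nbrs : ∀ i < N, s i = false → (nbrs i).countP s = 1
  card_lt : #{j ∈ range N | s j} < k

variable {N k nbrs} {s : ℕ → Bool} {m b c : ℕ}

lemma isDoomed_eq_false (hs : IsSmallPerfect N k nbrs s) (hm : m ≤ N)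
    (hb : ∀ j, b.testBit j = (decide (j < m) && s j)) (i : ℕ) : isDoomed nbrs m b i = false := by
  by_cases hi : i < m
  swap
  · simp [isDoomed, hi]
  cases hsi : s i
  swap
  · simp [isDoomed, hb, hsi]
  have hone := hs.countP_nbrs i (by omega) hsi
  have hle : nbrCount nbrs b i ≤ 1 :=
    hone ▸ List.countP_mono_left fun j _ hj => by simp_all
  have hdecided : (nbrs i).all (· < m) → nbrCount nbrs b i = 1 := fun hall =>
    hone ▸ List.countP_congr fun j hj => by simp_all
  simp only [isDoomed]
  split <;> simp_all

lemma prune_eq_false (hs : IsSmallPerfect N k nbrs s) (hm : m ≤ N)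
    (hb : ∀ j, b.testBit j = (decide (j < m) && s j)) (hc : c = #{j ∈ range m | s j}) :
    prune k nbrs m b c = false := by
  have hck : c < k := hc ▸ (card_le_card
    (filter_subset_filter _ (range_subset_range.mpr hm))).trans_lt hs.card_lt
  simp [prune, hck, isDoomed_eq_false hs hm hb]

lemma search_eq_true (hs : IsSmallPerfect N k nbrs s) : ∀ fuel m b c, m + fuel = N →
    (∀ j, b.testBit j = (decide (j < m) && s j)) → c = #{j ∈ range m | s j} →
    search N k nbrs fuel m b c = true
  | 0, m, b, c, hmN, hb, hc => by
    obtain rfl : m = N := hmN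
    have hbs : b.testBit = s := funext fun j => by
      by_cases hj : j < m
      · simp [hb, hj]
      · simp [hb, hj, hs.eq_false_of_le j (by omega)]
    simp only [search, isPerfectMask, nbrCount, hbs]
    simp only [Bool.and_eq_true, List.all_eq_true, List.mem_range, Bool.or_eq_true, beq_iff_eq,
      decide_eq_true_eq]
    refine ⟨fun i hi => ?_, hc ▸ hs.card_lt⟩
    cases hsi : s i
    · exact Or.inr (hs.countP_nbrs i hi hsi)
    · exact Or.inl rfl
  | fuel + 1, m, b, c, hmN, hb, hc => by
    have hcard : #{j ∈ range (m + 1) | s j} = #{j ∈ range m | s j} + if s m then 1 else 0 := by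
      rw [card_filter, card_filter, sum_range_succ]
    rw [search, prune_eq_false hs (by omega) hb hc, Bool.not_false, Bool.true_and,
      Bool.or_eq_true]
    cases hsm : s m
    · refine Or.inl (search_eq_true hs fuel (m + 1) b c (by omega) (fun j => ?_)
        (by simp [hcard, hsm, hc]))
      rw [hb]
      rcases eq_or_ne j m with rfl | hj
      · simp [hsm]
      · simp [hj.le_iff_lt]
    · refine Or.inr (search_eq_true hs fuel (m + 1) _ (c + 1) (by omega) (fun j => ?_)
        (by simp [hcard, hsm, hc]))
      rw [Nat.testBit_or, hb, Nat.testBit_two_pow]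
      rcases eq_or_ne j m with rfl | hj
      · simp [hsm]
      · simp [hj.le_iff_lt, hj.symm]

def indexNbrs {V : Type*} (e : V ≃ Fin N) (L : V → List V) (i : ℕ) : List ℕ :=
  if h : i < N then (L (e.symm ⟨i, h⟩)).map fun v => e v else []

theorem le_ncard_of_search_eq_false {V : Type*} [Fintype V] {G : SimpleGraph V} (e : V ≃ Fin N)
    {L : V → List V} (hL : ∀ u v, v ∈ L u ↔ G.Adj u v) (hnodup : ∀ u, (L u).Nodup)
    (h : search N k (indexNbrs e L) N 0 0 0 = false) {S : Set V} (hS : IsPerfDomSet G S) :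
    k ≤ S.ncard := by
  classical
  by_contra! hlt
  set s : ℕ → Bool := fun j => decide (∃ v ∈ S, (e v : ℕ) = j)
  have hse : ∀ v, s (e v) = decide (v ∈ S) := fun v => by
    simp [s, Fin.val_inj]
  have hcard : #{j ∈ range N | s j} = S.ncard := by
    rw [Set.ncard_eq_toFinset_card',
      ← card_map ⟨fun v => (e v : ℕ), Fin.val_injective.comp e.injective⟩]
    congr 1
    ext j
    simp only [mem_filter, mem_range, mem_map, Set.mem_toFinset, s, decide_eq_true_eq]
    constructor
    · rintro ⟨-, v, hv, rfl⟩
      exact ⟨v, hv, rfl⟩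
    · rintro ⟨v, hv, rfl⟩
      exact ⟨(e v).isLt, v, hv, rfl⟩
  have hperf : ∀ i < N, s i = false → (indexNbrs e L i).countP s = 1 := by
    intro i hi hsi
    obtain ⟨u, rfl⟩ : ∃ u, (e u : ℕ) = i := ⟨e.symm ⟨i, hi⟩, by simp⟩
    have hu : u ∉ S := by simpa [hse] using hsi
    rw [← isPerfDomSet_iff_card.mp hS u hu, indexNbrs, dif_pos hi, Fin.eta, e.symm_apply_apply,
      List.countP_map, List.countP_congr (q := fun v => decide (v ∈ S)) (by simp [hse]),
      ← (hnodup u).card_eq_countP]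
    congr 1
    ext v
    simp [hL, and_comm]
  have hsupp : ∀ j, N ≤ j → s j = false := by
    intro j hj
    simp only [s, decide_eq_false_iff_not]
    rintro ⟨v, -, rfl⟩
    exact (e v).isLt.not_ge hj
  have hsmall : IsSmallPerfect N k (indexNbrs e L) s := ⟨hsupp, hperf, hcard ▸ hlt⟩
  simpa [h] using search_eq_true hsmall N 0 0 0 (zero_add N) (by simp) (by simp)

end PerfDomSearch

open PerfDomSearch

def knightMoves : List (ℤ × ℤ) :=
  [(1, 2), (-1, 2), (1, -2), (-1, -2), (2, 1), (-2, 1), (2, -1), (-2, -1)]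

lemma knightAdj_iff_sub_mem {p q : ℤ × ℤ} : knightAdj p q ↔ q - p ∈ knightMoves := by
  have abs_eq_one (z : ℤ) : |z| = 1 ↔ z = 1 ∨ z = -1 := abs_eq zero_le_one
  have abs_eq_two (z : ℤ) : |z| = 2 ↔ z = 2 ∨ z = -2 := abs_eq zero_le_two
  obtain ⟨a, b⟩ := p
  obtain ⟨c, d⟩ := q
  simp only [knightAdj, abs_sub_comm a, abs_sub_comm b, Prod.mk_sub_mk]
  generalize c - a = x, d - b = y
  simp only [knightMoves, abs_eq_one, abs_eq_two, List.mem_cons, Prod.mk.injEq, List.not_mem_nil,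
    or_false, or_and_right, and_or_left, or_assoc]

instance : DecidableRel knightAdj := fun _ _ => decidable_of_iff _ knightAdj_iff_sub_mem.symm

instance (n m : ℕ) : DecidableRel (KN n m).Adj := fun _ _ =>
  inferInstanceAs (Decidable (knightAdj _ _))

section Board

variable {n m : ℕ}

def boardCell? (n m : ℕ) (p : ℤ × ℤ) : Option (Fin n × Fin m) :=
  if h : 0 ≤ p.1 ∧ p.1 < n ∧ 0 ≤ p.2 ∧ p.2 < m then
    some (⟨p.1.toNat, by omega⟩, ⟨p.2.toNat, by omega⟩)
  else none

lemma boardCell?_eq_some {p : ℤ × ℤ} {u : Fin n × Fin m} :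
    boardCell? n m p = some u ↔ p = ((u.1 : ℤ), (u.2 : ℤ)) := by
  obtain ⟨a, b⟩ := p
  obtain ⟨⟨x, hx⟩, ⟨y, hy⟩⟩ := u
  simp only [boardCell?]
  split_ifs with h
  · simp [Prod.ext_iff, Fin.ext_iff]
    omega
  · simp only [false_iff, Prod.mk.injEq, not_and]
    omega

def knightNbrs (n m : ℕ) (v : Fin n × Fin m) : List (Fin n × Fin m) :=
  knightMoves.filterMap fun d => boardCell? n m (((v.1 : ℤ), (v.2 : ℤ)) + d)

lemma mem_knightNbrs {u v : Fin n × Fin m} : u ∈ knightNbrs n m v ↔ (KN n m).Adj v u := by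
  simp only [knightNbrs, List.mem_filterMap, boardCell?_eq_some]
  refine ⟨?_, fun h => ⟨_, knightAdj_iff_sub_mem.mp h, add_sub_cancel _ _⟩⟩
  rintro ⟨d, hd, h⟩
  exact knightAdj_iff_sub_mem.mpr (by rwa [← h, add_sub_cancel_left])

lemma nodup_knightNbrs (v : Fin n × Fin m) : (knightNbrs n m v).Nodup := by
  refine List.Nodup.filterMap (fun d d' u hd hd' => ?_) (by decide)
  simp only [Option.mem_def, boardCell?_eq_some] at hd hd'
  exact add_left_cancel (hd.trans hd'.symm)

theorem le_perfDomNum_KN {k : ℕ}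
    (h : search (n * m) k (indexNbrs finProdFinEquiv (knightNbrs n m)) (n * m) 0 0 0 = false) :
    k ≤ perfDomNum (KN n m) :=
  le_perfDomNum fun _ hS => le_ncard_of_search_eq_false finProdFinEquiv
    (fun _ _ => mem_knightNbrs) nodup_knightNbrs h hS

theorem perfDomNum_KN_eq {k : ℕ} (S : Finset (Fin n × Fin m)) (hS : IsPerfDomSet (KN n m) S)
    (hcard : #S = k)
    (h : search (n * m) k (indexNbrs finProdFinEquiv (knightNbrs n m)) (n * m) 0 0 0 = false) :
    perfDomNum (KN n m) = k :=
  le_antisymm (hcard ▸ Set.ncard_coe_finset S ▸ perfDomNum_le hS) (le_perfDomNum_KN h)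

end Board

def perfDomSet10 : Finset (Fin 10 × Fin 4) :=
  {(0, 0), (0, 1), (0, 2), (0, 3), (1, 0), (1, 3), (2, 1), (2, 2),
    (7, 1), (7, 2), (8, 0), (8, 3), (9, 0), (9, 1), (9, 2), (9, 3)}

def perfDomSet11 : Finset (Fin 11 × Fin 4) :=
  {(0, 2), (1, 0), (1, 1), (1, 2), (2, 0), (2, 3), (3, 1), (3, 2),
    (8, 1), (8, 2), (9, 0), (9, 3), (10, 0), (10, 1), (10, 2), (10, 3)}

def perfDomSet12 : Finset (Fin 12 × Fin 4) :=
  {(0, 2), (1, 0), (1, 1), (1, 2), (2, 0), (2, 3), (3, 1), (3, 2),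
    (8, 1), (8, 2), (9, 0), (9, 3), (10, 1), (10, 2), (11, 0), (11, 3)}

lemma isPerfDomSet_perfDomSet10 : IsPerfDomSet (KN 10 4) perfDomSet10 :=
  isPerfDomSet_iff_card.mpr (by decide +kernel)

lemma isPerfDomSet_perfDomSet11 : IsPerfDomSet (KN 11 4) perfDomSet11 :=
  isPerfDomSet_iff_card.mpr (by decide +kernel)

lemma isPerfDomSet_perfDomSet12 : IsPerfDomSet (KN 12 4) perfDomSet12 :=
  isPerfDomSet_iff_card.mpr (by decide +kernel)

theorem stmt14 :
    perfDomNum (KN 10 4) = 16 ∧ perfDomNum (KN 11 4) = 16 ∧ perfDomNum (KN 12 4) = 16 :=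
  ⟨perfDomNum_KN_eq perfDomSet10 isPerfDomSet_perfDomSet10 (by decide) (by decide +kernel),
    perfDomNum_KN_eq perfDomSet11 isPerfDomSet_perfDomSet11 (by decide) (by decide +kernel),
    perfDomNum_KN_eq perfDomSet12 isPerfDomSet_perfDomSet12 (by decide) (by decide +kernel)⟩
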